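/- For every n ≥ 0 and every planar tree s ∈ T_{n+1}, there exists a unique planar tree t ∈ T_n such that s ∈ t + 1, where 1 denotes the planar tree | ∨ |. -/
import Mathlib


/-- A planar tree: a leaf `|` or a grafting `x⁰ ∨ x¹ ∨ ⋯ ∨ x^k` (`k ≥ 1`) of at
least two planar trees attached to a new root.  The children of
`node first middle last` are `first :: middle ++ [last]`. -/
inductive PT : Type
  | leaf : PT
  | node : PT → List PT → PT → PT

namespace PT

mutual
/-- Number of leaves of a planar tree. -/
def nleaves : PT → ℕ
  | leaf => 1
  | node f m l => nleaves f + nleavesList m + nleaves l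

def nleavesList : List PT → ℕ
  | [] => 0
  | t :: ts => nleaves t + nleavesList ts
end

/-- The degree of a planar tree: its number of leaves minus 1. -/
def deg (t : PT) : ℕ := nleaves t - 1

/-- The set `T n` of planar trees of degree `n`. -/
def T (n : ℕ) : Set PT := {t | t.deg = n}

mutual
/-- Number of internal vertices (grafting nodes) of a planar tree. -/
def nint : PT → ℕ
  | leaf => 0
  | node f m l => nint f + nintList m + nint l + 1

def nintList : List PT → ℕ
  | [] => 0
  | t :: ts => nint t + nintList ts
end

/-- The sum of two planar trees:
`| + y = {y}`, `x + | = {x}` and, for `x = x⁰ ∨ ⋯ ∨ x^k` and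
`y = y⁰ ∨ ⋯ ∨ y^ℓ`, `x + y = (x ⊣ y) ∪ (x ⊥ y) ∪ (x ⊢ y)` where
`x ⊣ y = {x⁰ ∨ ⋯ ∨ x^{k-1} ∨ z : z ∈ x^k + y}`,
`x ⊥ y = {x⁰ ∨ ⋯ ∨ x^{k-1} ∨ z ∨ y¹ ∨ ⋯ ∨ y^ℓ : z ∈ x^k + y⁰}` and
`x ⊢ y = {z ∨ y¹ ∨ ⋯ ∨ y^ℓ : z ∈ x + y⁰}`. -/
def psum : PT → PT → Set PT
  | leaf, y => {y}
  | node xf xm xl, leaf => {node xf xm xl}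
  | node xf xm xl, node yf ym yl =>
      ((fun z => node xf xm z) '' psum xl (node yf ym yl)) ∪
      ((fun z => node xf (xm ++ z :: ym) yl) '' psum xl yf) ∪
      ((fun z => node z ym yl) '' psum (node xf xm xl) yf)
  termination_by x y => sizeOf x + sizeOf y
  decreasing_by all_goals (simp_wf <;> omega)

/-- The left sum `x ⊣ y` of planar trees. -/
def pld : PT → PT → Set PT
  | x, leaf => {x}
  | leaf, _ => {leaf}
  | node xf xm xl, y => (fun z => node xf xm z) '' psum xl y

/-- The middle sum `x ⊥ y` of planar trees. -/
def pmd : PT → PT → Set PT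
  | _, leaf => {leaf}
  | leaf, _ => {leaf}
  | node xf xm xl, node yf ym yl => (fun z => node xf (xm ++ z :: ym) yl) '' psum xl yf

/-- The right sum `x ⊢ y` of planar trees. -/
def prd : PT → PT → Set PT
  | leaf, y => {y}
  | _, leaf => {leaf}
  | x, node yf ym yl => (fun z => node z ym yl) '' psum x yf

/-- A grove of degree `n`: a nonempty subset of `T n`. -/
def Grove (n : ℕ) (A : Set PT) : Prop := A.Nonempty ∧ ∀ x ∈ A, x.deg = n

/-- Sum of groves. -/
def pgsum (A B : Set PT) : Set PT := ⋃ x ∈ A, ⋃ y ∈ B, psum x y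

/-- Left sum of groves. -/
def pgl (A B : Set PT) : Set PT := ⋃ x ∈ A, ⋃ y ∈ B, pld x y

/-- Middle sum of groves. -/
def pgm (A B : Set PT) : Set PT := ⋃ x ∈ A, ⋃ y ∈ B, pmd x y

/-- Right sum of groves. -/
def pgr (A B : Set PT) : Set PT := ⋃ x ∈ A, ⋃ y ∈ B, prd x y

end PT


namespace PT

lemma psum_leaf_right (x : PT) : psum x leaf = {x} := by
  cases x <;> simp [psum]

lemma nleaves_pos (x : PT) : 1 ≤ nleaves x := by
  cases x with
  | leaf => simp [nleaves]
  | node f m l =>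
    have := nleaves_pos f
    simp [nleaves]; omega

lemma mem_psum_one (xf : PT) (xm : List PT) (xl s : PT) :
    s ∈ psum (node xf xm xl) (node leaf [] leaf) ↔
      (∃ z ∈ psum xl (node leaf [] leaf), s = node xf xm z) ∨
      s = node xf (xm ++ [xl]) leaf ∨
      s = node (node xf xm xl) [] leaf := by
  rw [psum, psum_leaf_right, psum_leaf_right]
  simp only [Set.mem_union, Set.mem_image, Set.mem_singleton_iff, Set.image_singleton]
  constructor
  · rintro ((⟨z, hz, rfl⟩ | rfl) | rfl)
    exacts [Or.inl ⟨z, hz, rfl⟩, Or.inr (Or.inl rfl), Or.inr (Or.inr rfl)]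
  · rintro (⟨z, hz, rfl⟩ | rfl | rfl)
    exacts [Or.inl (Or.inl ⟨z, hz, rfl⟩), Or.inl (Or.inr rfl), Or.inr rfl]

lemma leaf_not_mem_psum_one (x : PT) : leaf ∉ psum x (node leaf [] leaf) := by
  cases x with
  | leaf => simp [psum]
  | node f m l =>
    rw [mem_psum_one]
    rintro (⟨z, _, h⟩ | h | h) <;> simp_all

lemma nleavesList_append (l₁ l₂ : List PT) :
    nleavesList (l₁ ++ l₂) = nleavesList l₁ + nleavesList l₂ := by
  induction l₁ with
  | nil => simp [nleavesList]
  | cons a l ih => simp [nleavesList, ih]; omega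

lemma nleaves_of_mem_psum_one : ∀ N t s, sizeOf t ≤ N →
    s ∈ psum t (node leaf [] leaf) → nleaves s = nleaves t + 1 := by
  intro N
  induction N with
  | zero => intro t; cases t <;> (intro s h; simp at h)
  | succ N ih =>
    intro t s hN hmem
    cases t with
    | leaf => simp [psum] at hmem; subst hmem; simp [nleaves, nleavesList]
    | node f m l =>
      rw [mem_psum_one] at hmem
      rcases hmem with ⟨z, hz, rfl⟩ | rfl | rfl
      · have hl : sizeOf l ≤ N := by have := hN; simp at this; omega
        have := ih l z hl hz
        simp [nleaves]; omega
      · simp [nleaves, nleavesList, nleavesList_append] <;> omega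
      · simp [nleaves, nleavesList] <;> omega

lemma exists_pred : ∀ N s, sizeOf s ≤ N → s ≠ leaf →
    ∃ t, s ∈ psum t (node leaf [] leaf) := by
  intro N
  induction N with
  | zero => intro s; cases s <;> (intro h; simp at h)
  | succ N ih =>
    intro s hN hne
    cases s with
    | leaf => exact absurd rfl hne
    | node sf sm sl =>
      cases sl with
      | node a b c =>
        have hsz : sizeOf (node a b c) ≤ N := by simp at hN ⊢; omega
        obtain ⟨t', ht'⟩ := ih (node a b c) hsz (by simp)
        exact ⟨node sf sm t', (mem_psum_one _ _ _ _).2 (Or.inl ⟨node a b c, ht', rfl⟩)⟩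
      | leaf =>
        rcases List.eq_nil_or_concat sm with rfl | ⟨l, a, rfl⟩
        · cases sf with
          | leaf => exact ⟨leaf, by simp [psum]⟩
          | node a b c =>
            exact ⟨node a b c, (mem_psum_one _ _ _ _).2 (Or.inr (Or.inr rfl))⟩
        · exact ⟨node sf l a, (mem_psum_one _ _ _ _).2 (Or.inr (Or.inl (by simp)))⟩

lemma uniq_pred : ∀ N s, sizeOf s ≤ N → ∀ t t',
    s ∈ psum t (node leaf [] leaf) → s ∈ psum t' (node leaf [] leaf) → t = t' := by
  intro N
  induction N with
  | zero => intro s; cases s <;> (intro h; simp at h)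
  | succ N ih =>
    intro s hN t t' ht ht'
    -- characterize membership for arbitrary t
    have key : ∀ u, s ∈ psum u (node leaf [] leaf) →
        (u = leaf ∧ s = node leaf [] leaf) ∨
        (∃ xf xm xl, u = node xf xm xl ∧
          ((∃ z ∈ psum xl (node leaf [] leaf), s = node xf xm z) ∨
           s = node xf (xm ++ [xl]) leaf ∨
           s = node (node xf xm xl) [] leaf)) := by
      intro u hu
      cases u with
      | leaf => simp [psum] at hu; exact Or.inl ⟨rfl, hu⟩
      | node a b c =>
        exact Or.inr ⟨a, b, c, rfl, (mem_psum_one _ _ _ _).1 hu⟩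
    rcases key t ht with ⟨rfl, rfl⟩ | ⟨xf, xm, xl, rfl, hc⟩
    · -- s = one; show t' = leaf
      rcases key t' ht' with ⟨rfl, _⟩ | ⟨yf, ym, yl, rfl, hc'⟩
      · rfl
      · exfalso
        rcases hc' with ⟨z, hz, hs⟩ | hs | hs
        · injection hs with a b c
          exact leaf_not_mem_psum_one yl (c ▸ hz)
        · injection hs with a b c
          simp at b
        · injection hs with a b c
          exact PT.noConfusion a
    · rcases key t' ht' with ⟨rfl, rfl⟩ | ⟨yf, ym, yl, rfl, hc'⟩
      · exfalso
        rcases hc with ⟨z, hz, hs⟩ | hs | hs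
        · injection hs with a b c
          exact leaf_not_mem_psum_one xl (c ▸ hz)
        · injection hs with a b c
          simp at b
        · injection hs with a b c
          exact PT.noConfusion a
      · -- both nodes
        rcases hc with ⟨z, hz, rfl⟩ | rfl | rfl
        · -- last branch of s is z, z ≠ leaf
          rcases hc' with ⟨w, hw, he⟩ | he | he
          · obtain ⟨h1, h2, h3⟩ : xf = yf ∧ xm = ym ∧ z = w := by
              injection he with a b c; exact ⟨a, b, c⟩
            subst h1; subst h2; subst h3
            have hzs : sizeOf z ≤ N := by simp at hN; omega
            have := ih z hzs xl yl hz hw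
            rw [this]
          · exfalso; injection he with a b c; subst c
            exact leaf_not_mem_psum_one xl hz
          · exfalso; injection he with a b c; subst c
            exact leaf_not_mem_psum_one xl hz
        · rcases hc' with ⟨w, hw, he⟩ | he | he
          · exfalso; injection he with a b c; subst c
            exact leaf_not_mem_psum_one yl hw
          · obtain ⟨h1, h2⟩ : xf = yf ∧ xm ++ [xl] = ym ++ [yl] := by
              injection he with a b c; exact ⟨a, b⟩
            subst h1
            obtain ⟨h3, h4⟩ := List.append_inj' h2 rfl
            simp at h4
            rw [h3, h4]
          · exfalso; injection he with a b c
            simp at b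
        · rcases hc' with ⟨w, hw, he⟩ | he | he
          · exfalso; injection he with a b c; subst c
            exact leaf_not_mem_psum_one yl hw
          · exfalso; injection he with a b c
            simp at b
          · exact (PT.node.inj he).1

end PT

open PT in
/-- for every planar tree `s` of degree `n + 1` there is a unique
planar tree `t` of degree `n` with `s ∈ t + 1`, where `1 = | ∨ |`. -/
theorem exists_unique_pred (n : ℕ) (s : PT) (hs : s ∈ T (n + 1)) :
    ∃! t : PT, t ∈ T n ∧ s ∈ psum t (node PT.leaf [] PT.leaf) := by
  have hnl : nleaves s = n + 2 := by
    have h1 := nleaves_pos s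
    have : deg s = n + 1 := hs
    unfold deg at this
    omega
  have hne : s ≠ PT.leaf := by
    intro h; subst h; simp [nleaves] at hnl
  obtain ⟨t, ht⟩ := exists_pred (sizeOf s) s le_rfl hne
  refine ⟨t, ⟨?_, ht⟩, ?_⟩
  · have := nleaves_of_mem_psum_one (sizeOf t) t s le_rfl ht
    show deg t = n
    unfold deg
    omega
  · rintro t' ⟨_, ht'⟩
    exact uniq_pred (sizeOf s) s le_rfl t' t ht' ht
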